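/- arXiv:1409.5528 — 2 statements merged into one kernel-verified Lean document; each statement's English description precedes it below -/
import Mathlib

section
/- Let γ ∈ (0,1], m > 1/γ, and let τ ≥ e and R ≥ 0 be (possibly dependent) real random variables with E[exp(c R^γ)] < ∞ for some c > 0 and E[τ^2 (log τ)^m] < ∞. Then E[τ^2 (log τ)^{m − 1/γ} · R] < ∞. -/
open MeasureTheory Real

lemma aux_exp_bound {p a : ℝ} (hp : 0 ≤ p) (ha : 0 < a) (y : ℝ) (hy : 0 ≤ y) :
    y ^ p ≤ (p / a) ^ p * Real.exp (-p) * Real.exp (a * y) := by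
  rcases hp.eq_or_lt with hp0 | hp0
  · rw [← hp0]
    simp only [Real.rpow_zero, neg_zero, Real.exp_zero, one_mul]
    exact Real.one_le_exp (by positivity)
  · rcases hy.eq_or_lt with hy0 | hy0
    · rw [← hy0, Real.zero_rpow hp0.ne']
      positivity
    · have hlog1 : Real.log (a * y / p) ≤ a * y / p - 1 :=
        Real.log_le_sub_one_of_pos (by positivity)
      have hlog2 : Real.log y = Real.log (p / a) + Real.log (a * y / p) := by
        rw [← Real.log_mul (by positivity) (by positivity)]
        congr 1
        field_simp
      have key : Real.log y * p ≤ Real.log (p / a) * p + -p + a * y := by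
        have h3 : Real.log y * p ≤ (Real.log (p / a) + (a * y / p - 1)) * p := by
          apply mul_le_mul_of_nonneg_right _ hp
          linarith
        have h4 : (a * y / p) * p = a * y := by field_simp
        nlinarith
      calc y ^ p = Real.exp (Real.log y * p) := Real.rpow_def_of_pos hy0 p
        _ ≤ Real.exp (Real.log (p / a) * p + -p + a * y) := Real.exp_le_exp.mpr key
        _ = (p / a) ^ p * Real.exp (-p) * Real.exp (a * y) := by
            rw [Real.rpow_def_of_pos (by positivity), ← Real.exp_add, ← Real.exp_add]

theorem stmt3 {Ω : Type*} [MeasurableSpace Ω] (μ : Measure Ω) [IsProbabilityMeasure μ]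
    (γ m : ℝ) (hγ : γ ∈ Set.Ioc (0:ℝ) 1) (hm : 1 / γ < m)
    (τ R : Ω → ℝ) (hmτ : Measurable τ) (hmR : Measurable R)
    (hτe : ∀ᵐ ω ∂μ, Real.exp 1 ≤ τ ω) (hR0 : ∀ᵐ ω ∂μ, 0 ≤ R ω)
    (hRexp : ∃ c : ℝ, 0 < c ∧ Integrable (fun ω => Real.exp (c * (R ω) ^ γ)) μ)
    (hτint : Integrable (fun ω => (τ ω) ^ 2 * (Real.log (τ ω)) ^ m) μ) :
    Integrable (fun ω => (τ ω) ^ 2 * (Real.log (τ ω)) ^ (m - 1 / γ) * R ω) μ := by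
  obtain ⟨c, hc, hRint⟩ := hRexp
  obtain ⟨hγ0, hγ1⟩ := hγ
  have hγne : γ ≠ 0 := hγ0.ne'
  have hm0 : 0 < m := lt_trans (by positivity) hm
  have hγm1 : 1 < γ * m := by
    have := (div_lt_iff₀ hγ0).mp hm
    linarith [this]
  have hmsub : 0 ≤ m - 1 / γ := by linarith [hm]
  set l : ℝ := (4 / c) ^ (1 / γ) with hl_def
  have hl : 0 < l := Real.rpow_pos_of_pos (by positivity) _
  have hlγ : l ^ γ = 4 / c := by
    rw [hl_def, ← Real.rpow_mul (by positivity), one_div, inv_mul_cancel₀ hγne,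
      Real.rpow_one]
  set C₂ : ℝ := (m / (c / 2)) ^ m * Real.exp (-m) with hC₂_def
  have hC₂ : 0 ≤ C₂ := by positivity
  set D : ℝ := l ^ (1 - γ * m) * C₂ with hD_def
  have hD : 0 ≤ D := by positivity
  apply Integrable.mono' ((hτint.const_mul l).add (hRint.const_mul D))
  · apply Measurable.aestronglyMeasurable
    have hlogm : Measurable fun x => Real.log (τ x) := hmτ.log
    fun_prop
  · filter_upwards [hτe, hR0] with ω ht hr
    set t := τ ω
    set r := R ω
    have ht0 : 0 < t := lt_of_lt_of_le (Real.exp_pos 1) ht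
    have hlt : 1 ≤ Real.log t := by
      rw [← Real.log_exp 1]
      exact Real.log_le_log (Real.exp_pos 1) ht
    have hlt0 : 0 < Real.log t := lt_of_lt_of_le one_pos hlt
    have habs : |t ^ 2 * Real.log t ^ (m - 1 / γ) * r| =
        t ^ 2 * Real.log t ^ (m - 1 / γ) * r := by
      apply abs_of_nonneg
      have := Real.rpow_nonneg hlt0.le (m - 1 / γ)
      positivity
    simp only [Pi.add_apply]
    rw [Real.norm_eq_abs, habs]
    have hterm1 : 0 ≤ l * (t ^ 2 * Real.log t ^ m) := by
      have := Real.rpow_nonneg hlt0.le m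
      positivity
    have hterm2 : 0 ≤ D * Real.exp (c * r ^ γ) := by positivity
    rcases le_or_gt r (l * Real.log t ^ (1 / γ)) with hcase | hcase
    · -- small R case
      have h1 : t ^ 2 * Real.log t ^ (m - 1 / γ) * r ≤
          t ^ 2 * Real.log t ^ (m - 1 / γ) * (l * Real.log t ^ (1 / γ)) := by
        apply mul_le_mul_of_nonneg_left hcase
        have := Real.rpow_nonneg hlt0.le (m - 1 / γ)
        positivity
      have h2 : t ^ 2 * Real.log t ^ (m - 1 / γ) * (l * Real.log t ^ (1 / γ)) =
          l * (t ^ 2 * Real.log t ^ m) := by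
        rw [show t ^ 2 * Real.log t ^ (m - 1 / γ) * (l * Real.log t ^ (1 / γ)) =
          l * (t ^ 2 * (Real.log t ^ (m - 1 / γ) * Real.log t ^ (1 / γ))) by ring,
          ← Real.rpow_add hlt0]
        ring_nf
      calc t ^ 2 * Real.log t ^ (m - 1 / γ) * r
          ≤ l * (t ^ 2 * Real.log t ^ m) := h1.trans_eq h2
        _ ≤ l * (t ^ 2 * Real.log t ^ m) + D * Real.exp (c * r ^ γ) :=
            le_add_of_nonneg_right hterm2
    · -- large R case
      have hr0 : 0 < r := lt_trans (by positivity) hcase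
      have hlogle : Real.log t ≤ (r / l) ^ γ := by
        have h1 : Real.log t ^ (1 / γ) ≤ r / l := by
          rw [le_div_iff₀ hl, mul_comm]
          exact hcase.le
        calc Real.log t = (Real.log t ^ (1 / γ)) ^ γ := by
              rw [← Real.rpow_mul hlt0.le, one_div, inv_mul_cancel₀ hγne, Real.rpow_one]
          _ ≤ (r / l) ^ γ := Real.rpow_le_rpow (Real.rpow_nonneg hlt0.le _) h1 hγ0.le
      have hrl : (r / l) ^ γ = r ^ γ * (c / 4) := by
        rw [Real.div_rpow hr0.le hl.le, hlγ]
        field_simp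
      have ht2 : t ^ 2 ≤ Real.exp (c / 2 * r ^ γ) := by
        calc t ^ 2 = Real.exp (2 * Real.log t) := by
              rw [← Real.exp_log ht0, Real.log_exp, ← Real.exp_nat_mul]
              norm_num
          _ ≤ Real.exp (c / 2 * r ^ γ) := by
              apply Real.exp_le_exp.mpr
              rw [hrl] at hlogle
              nlinarith
      have hlog2 : Real.log t ^ (m - 1 / γ) ≤ (r / l) ^ (γ * m - 1) := by
        calc Real.log t ^ (m - 1 / γ) ≤ ((r / l) ^ γ) ^ (m - 1 / γ) :=
              Real.rpow_le_rpow hlt0.le hlogle hmsub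
          _ = (r / l) ^ (γ * m - 1) := by
              rw [← Real.rpow_mul (by positivity)]
              congr 1
              field_simp
      have hsplit : (r / l) ^ (γ * m - 1) = l ^ (1 - γ * m) * r ^ (γ * m - 1) := by
        rw [Real.div_rpow hr0.le hl.le, div_eq_mul_inv, ← Real.rpow_neg hl.le,
          neg_sub]
        ring
      have hrpow : r ^ (γ * m - 1) * r = r ^ (γ * m) := by
        nth_rewrite 2 [← Real.rpow_one r]
        rw [← Real.rpow_add hr0]
        ring_nf
      have haux : r ^ (γ * m) ≤ C₂ * Real.exp (c / 2 * r ^ γ) := by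
        calc r ^ (γ * m) = (r ^ γ) ^ m := by
              rw [← Real.rpow_mul hr0.le]
          _ ≤ C₂ * Real.exp (c / 2 * r ^ γ) := by
              have h := aux_exp_bound hm0.le (show (0:ℝ) < c / 2 by positivity) (r ^ γ)
                (Real.rpow_nonneg hr0.le γ)
              rw [hC₂_def]
              linarith [h]
      have hexp0 : 0 ≤ Real.exp (c / 2 * r ^ γ) := (Real.exp_pos _).le
      calc t ^ 2 * Real.log t ^ (m - 1 / γ) * r
          ≤ Real.exp (c / 2 * r ^ γ) * ((r / l) ^ (γ * m - 1)) * r := by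
            apply mul_le_mul_of_nonneg_right _ hr0.le
            apply mul_le_mul ht2 hlog2 (Real.rpow_nonneg hlt0.le _) hexp0
        _ = l ^ (1 - γ * m) * (r ^ (γ * m)) * Real.exp (c / 2 * r ^ γ) := by
            rw [hsplit]
            rw [show Real.exp (c / 2 * r ^ γ) * (l ^ (1 - γ * m) * r ^ (γ * m - 1)) * r
              = l ^ (1 - γ * m) * (r ^ (γ * m - 1) * r) * Real.exp (c / 2 * r ^ γ) by ring,
              hrpow]
        _ ≤ l ^ (1 - γ * m) * (C₂ * Real.exp (c / 2 * r ^ γ)) * Real.exp (c / 2 * r ^ γ) := by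
            apply mul_le_mul_of_nonneg_right _ hexp0
            exact mul_le_mul_of_nonneg_left haux (by positivity)
        _ = D * Real.exp (c * r ^ γ) := by
            rw [hD_def, show c * r ^ γ = c / 2 * r ^ γ + c / 2 * r ^ γ by ring,
              Real.exp_add]
            ring
        _ ≤ l * (t ^ 2 * Real.log t ^ m) + D * Real.exp (c * r ^ γ) :=
            le_add_of_nonneg_left hterm1
end

section
/- Let p ≥ 1, let C < ∞, and let (a_k)_{k≥1} be a sequence of nonnegative random variables with E[a_k^{2p}] ≤ C for all k. Let K be a positive-integer-valued random variable such that for every q ≥ 1 there exists C_q < ∞ with P(K = j) ≤ C_q j^{−q} for all j ≥ 1. Then E[(Σ_{k=1}^K a_k)^p] < ∞. -/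
/-!
On the event `{K = j}` the sum has `j` terms, so the power-mean inequality and the moment bound
give `E[(∑_{k ≤ j} a_k)^{2p}] ≤ j^{2p} C`. Cauchy–Schwarz against `1_{K = j}` bounds the
contribution of `{K = j}` by `(P(K = j) · j^{2p} C)^{1/2}`, and the tail bound with
`q = 2p + 4` makes this `O(j^{-2})`, which is summable. Working with `ℝ≥0∞`-valued integrals
avoids any integrability bookkeeping until the very end.
-/

open MeasureTheory Real Finset
open scoped ENNReal

section

variable {Ω : Type*} [MeasurableSpace Ω] {μ : Measure Ω}

theorem measurable_apply_comp_of_countable {β γ : Type*} [Countable β] [MeasurableSpace β]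
    [MeasurableSingletonClass β] [MeasurableSpace γ] {F : β → Ω → γ}
    (hF : ∀ j, Measurable (F j)) {K : Ω → β} (hK : Measurable K) :
    Measurable fun ω => F (K ω) ω :=
  (measurable_from_prod_countable_left (f := fun x : Ω × β => F x.2 x.1) hF).comp
    (measurable_id.prodMk hK)

theorem lintegral_eq_tsum_setLIntegral_preimage {β : Type*} [Countable β] [MeasurableSpace β]
    [MeasurableSingletonClass β] {K : Ω → β} (hK : Measurable K) (F : β → Ω → ℝ≥0∞) :
    ∫⁻ ω, F (K ω) ω ∂μ = ∑' j, ∫⁻ ω in K ⁻¹' {j}, F j ω ∂μ := by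
  have hfib : ⋃ j, K ⁻¹' {j} = Set.univ := by
    ext ω; simp
  rw [← setLIntegral_univ, ← hfib, lintegral_iUnion (fun j => hK (measurableSet_singleton j))
    (fun i j hij => Disjoint.preimage K (Set.disjoint_singleton.2 hij))]
  exact tsum_congr fun j => setLIntegral_congr_fun (hK (measurableSet_singleton j))
    fun ω hω => by rw [Set.mem_preimage.1 hω]

theorem setLIntegral_le_measure_rpow_mul_lintegral_rpow {p q : ℝ} (hpq : p.HolderConjugate q)
    {s : Set Ω} (hs : MeasurableSet s) {g : Ω → ℝ≥0∞} (hg : AEMeasurable g μ) :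
    ∫⁻ ω in s, g ω ∂μ ≤ μ s ^ (1 / p) * (∫⁻ ω, g ω ^ q ∂μ) ^ (1 / q) := by
  have hind : ∫⁻ ω, s.indicator 1 ω ^ p ∂μ = μ s := by
    rw [← lintegral_indicator_one hs]
    congr 1; ext ω; by_cases hω : ω ∈ s <;> simp [hω, hpq.pos]
  calc ∫⁻ ω in s, g ω ∂μ = ∫⁻ ω, (s.indicator 1 * g : Ω → ℝ≥0∞) ω ∂μ := by
        rw [← lintegral_indicator hs]; congr 1; ext ω; by_cases hω : ω ∈ s <;> simp [hω]
    _ ≤ _ := by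
        rw [← hind]
        exact ENNReal.lintegral_mul_le_Lp_mul_Lq μ hpq
          ((measurable_const.indicator hs).aemeasurable) hg

theorem lintegral_ofReal_rpow_le {f : Ω → ℝ} (hf : ∀ ω, 0 ≤ f ω) {r C : ℝ} (hr : 0 ≤ r)
    (hint : Integrable (fun ω => f ω ^ r) μ) (hC : ∫ ω, f ω ^ r ∂μ ≤ C) :
    ∫⁻ ω, ENNReal.ofReal (f ω) ^ r ∂μ ≤ ENNReal.ofReal C := by
  simp_rw [ENNReal.ofReal_rpow_of_nonneg (hf _) hr]
  rw [← ofReal_integral_eq_lintegral_ofReal hint (ae_of_all _ fun ω => rpow_nonneg (hf ω) r)]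
  exact ENNReal.ofReal_le_ofReal hC

theorem lintegral_sum_rpow_le {ι : Type*} {p : ℝ} (hp : 1 ≤ p) {s : Finset ι}
    {f : ι → Ω → ℝ≥0∞} (hf : ∀ i ∈ s, AEMeasurable (f i) μ) {c : ℝ≥0∞}
    (hc : ∀ i ∈ s, ∫⁻ ω, f i ω ^ p ∂μ ≤ c) :
    ∫⁻ ω, (∑ i ∈ s, f i ω) ^ p ∂μ ≤ (#s : ℝ≥0∞) ^ p * c := by
  calc ∫⁻ ω, (∑ i ∈ s, f i ω) ^ p ∂μ
      ≤ ∫⁻ ω, (#s : ℝ≥0∞) ^ (p - 1) * ∑ i ∈ s, f i ω ^ p ∂μ :=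
        lintegral_mono fun ω => ENNReal.rpow_sum_le_const_mul_sum_rpow s (f · ω) hp
    _ = (#s : ℝ≥0∞) ^ (p - 1) * ∑ i ∈ s, ∫⁻ ω, f i ω ^ p ∂μ := by
        rw [lintegral_const_mul' _ _ (by simp [hp]), lintegral_finsetSum' _ fun i hi =>
          (hf i hi).pow_const p]
    _ ≤ (#s : ℝ≥0∞) ^ (p - 1) * (#s * c) := by
        gcongr
        simpa using Finset.sum_le_sum hc
    _ = (#s : ℝ≥0∞) ^ p * c := by
        rw [← mul_assoc]
        nth_rw 2 [← ENNReal.rpow_one (#s : ℝ≥0∞)]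
        rw [← ENNReal.rpow_add_of_nonneg _ _ (by linarith) zero_le_one, sub_add_cancel]

theorem setLIntegral_rpow_sum_le {ι : Type*} {p : ℝ} (hp : 1 ≤ 2 * p) {t : Set Ω}
    (ht : MeasurableSet t) {s : Finset ι} {f : ι → Ω → ℝ≥0∞}
    (hf : ∀ i ∈ s, AEMeasurable (f i) μ) {c : ℝ≥0∞}
    (hc : ∀ i ∈ s, ∫⁻ ω, f i ω ^ (2 * p) ∂μ ≤ c) :
    ∫⁻ ω in t, (∑ i ∈ s, f i ω) ^ p ∂μ
      ≤ μ t ^ (1 / 2 : ℝ) * (#s : ℝ≥0∞) ^ p * c ^ (1 / 2 : ℝ) := by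
  have hsum : AEMeasurable (fun ω => (∑ i ∈ s, f i ω) ^ p) μ :=
    (Finset.aemeasurable_fun_sum _ hf).pow_const p
  calc ∫⁻ ω in t, (∑ i ∈ s, f i ω) ^ p ∂μ
      ≤ μ t ^ (1 / 2 : ℝ)
          * (∫⁻ ω, ((∑ i ∈ s, f i ω) ^ p) ^ (2 : ℝ) ∂μ) ^ (1 / 2 : ℝ) :=
        setLIntegral_le_measure_rpow_mul_lintegral_rpow .two_two ht hsum
    _ = μ t ^ (1 / 2 : ℝ)
          * (∫⁻ ω, (∑ i ∈ s, f i ω) ^ (2 * p) ∂μ) ^ (1 / 2 : ℝ) := by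
        simp_rw [← ENNReal.rpow_mul, mul_comm p]
    _ ≤ μ t ^ (1 / 2 : ℝ) * ((#s : ℝ≥0∞) ^ (2 * p) * c) ^ (1 / 2 : ℝ) := by
        gcongr
        exact lintegral_sum_rpow_le hp hf hc
    _ = μ t ^ (1 / 2 : ℝ) * (#s : ℝ≥0∞) ^ p * c ^ (1 / 2 : ℝ) := by
        rw [ENNReal.mul_rpow_of_nonneg _ _ (by norm_num), ← ENNReal.rpow_mul, ← mul_assoc]
        ring_nf

theorem tsum_measure_preimage_rpow_mul_lt_top [IsFiniteMeasure μ] {K : Ω → ℕ} {r Cq : ℝ}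
    (hr : 0 < r) (hCq : 0 ≤ Cq)
    (hK : ∀ j : ℕ, 1 ≤ j →
      (μ {ω | K ω = j}).toReal ≤ Cq * (j : ℝ) ^ (-(2 * r + 4))) :
    ∑' j : ℕ, μ {ω | K ω = j} ^ (1 / 2 : ℝ) * (j : ℝ≥0∞) ^ r < ⊤ := by
  have hterm : ∀ j : ℕ, μ {ω | K ω = j} ^ (1 / 2 : ℝ) * (j : ℝ≥0∞) ^ r
      ≤ ENNReal.ofReal (Cq ^ (1 / 2 : ℝ) * (j : ℝ) ^ (-2 : ℝ)) := by
    intro j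
    rcases Nat.eq_zero_or_pos j with rfl | hj
    · simp [hr]
    have hj' : (0 : ℝ) < j := by exact_mod_cast hj
    have hμ : μ {ω | K ω = j} ≤ ENNReal.ofReal (Cq * (j : ℝ) ^ (-(2 * r + 4))) := by
      rw [← ENNReal.ofReal_toReal (measure_ne_top μ _)]
      exact ENNReal.ofReal_le_ofReal (hK j hj)
    calc μ {ω | K ω = j} ^ (1 / 2 : ℝ) * (j : ℝ≥0∞) ^ r
        ≤ ENNReal.ofReal (Cq * (j : ℝ) ^ (-(2 * r + 4))) ^ (1 / 2 : ℝ)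
            * ENNReal.ofReal j ^ r := by
          rw [ENNReal.ofReal_natCast]; gcongr
      _ = ENNReal.ofReal (Cq ^ (1 / 2 : ℝ) * (j : ℝ) ^ (-2 : ℝ)) := by
          rw [ENNReal.ofReal_rpow_of_nonneg (by positivity) (by norm_num),
            ENNReal.ofReal_rpow_of_nonneg hj'.le hr.le, ← ENNReal.ofReal_mul (by positivity),
            mul_rpow hCq (by positivity), ← rpow_mul hj'.le, mul_assoc, ← rpow_add hj']
          ring_nf
  calc ∑' j : ℕ, μ {ω | K ω = j} ^ (1 / 2 : ℝ) * (j : ℝ≥0∞) ^ r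
      ≤ ∑' j : ℕ, ENNReal.ofReal (Cq ^ (1 / 2 : ℝ) * (j : ℝ) ^ (-2 : ℝ)) :=
        ENNReal.tsum_le_tsum hterm
    _ = ENNReal.ofReal (∑' j : ℕ, Cq ^ (1 / 2 : ℝ) * (j : ℝ) ^ (-2 : ℝ)) :=
        (ENNReal.ofReal_tsum_of_nonneg (fun j => by positivity)
          ((Real.summable_nat_rpow.2 (by norm_num)).mul_left _)).symm
    _ < ⊤ := ENNReal.ofReal_lt_top

end

theorem stmt6_general {Ω : Type*} [MeasurableSpace Ω] (μ : Measure Ω) [IsProbabilityMeasure μ]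
    (p C : ℝ) (hp : 1 ≤ p)
    (a : ℕ → Ω → ℝ) (hma : ∀ k, Measurable (a k)) (ha0 : ∀ k ω, 0 ≤ a k ω)
    (haint : ∀ k, Integrable (fun ω => (a k ω) ^ (2 * p)) μ)
    (haC : ∀ k, ∫ ω, (a k ω) ^ (2 * p) ∂μ ≤ C)
    (K : Ω → ℕ) (hmK : Measurable K)
    (hKtail : ∀ q : ℝ, 1 ≤ q → ∃ Cq : ℝ, 0 < Cq ∧ ∀ j : ℕ, 1 ≤ j →
      (μ {ω | K ω = j}).toReal ≤ Cq * (j : ℝ) ^ (-q)) :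
    Integrable (fun ω => (∑ k ∈ Finset.Icc 1 (K ω), a k ω) ^ p) μ := by
  have hofReal : ∀ ω, ENNReal.ofReal ((∑ k ∈ Icc 1 (K ω), a k ω) ^ p)
      = (∑ k ∈ Icc 1 (K ω), ENNReal.ofReal (a k ω)) ^ p := fun ω => by
    rw [← ENNReal.ofReal_rpow_of_nonneg (sum_nonneg fun k _ => ha0 k ω) (by linarith),
      ENNReal.ofReal_sum_of_nonneg fun k _ => ha0 k ω]
  have hmeas : Measurable fun ω => (∑ k ∈ Icc 1 (K ω), a k ω) ^ p :=
    measurable_apply_comp_of_countable (F := fun j ω => (∑ k ∈ Icc 1 j, a k ω) ^ p)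
      (fun j => (Finset.measurable_sum _ fun k _ => hma k).pow_const p) hmK
  obtain ⟨Cq, hCq, htail⟩ := hKtail (2 * p + 4) (by linarith)
  refine ⟨hmeas.aestronglyMeasurable, ?_⟩
  rw [hasFiniteIntegral_iff_ofReal
    (ae_of_all _ fun ω => rpow_nonneg (sum_nonneg fun k _ => ha0 k ω) _)]
  simp_rw [hofReal]
  rw [lintegral_eq_tsum_setLIntegral_preimage hmK
    fun j ω => (∑ k ∈ Icc 1 j, ENNReal.ofReal (a k ω)) ^ p]
  calc ∑' j, ∫⁻ ω in K ⁻¹' {j}, (∑ k ∈ Icc 1 j, ENNReal.ofReal (a k ω)) ^ p ∂μ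
      ≤ ∑' j : ℕ,
          μ {ω | K ω = j} ^ (1 / 2 : ℝ) * (j : ℝ≥0∞) ^ p * ENNReal.ofReal C ^ (1 / 2 : ℝ) :=
        ENNReal.tsum_le_tsum fun j => by
          have := setLIntegral_rpow_sum_le (s := Icc 1 j) (by linarith)
            (hmK (measurableSet_singleton j)) (fun k _ => (hma k).ennreal_ofReal.aemeasurable)
            fun k _ => lintegral_ofReal_rpow_le (ha0 k) (by linarith) (haint k) (haC k)
          rwa [Nat.card_Icc, Nat.add_sub_cancel] at this
    _ = (∑' j : ℕ, μ {ω | K ω = j} ^ (1 / 2 : ℝ) * (j : ℝ≥0∞) ^ p)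
          * ENNReal.ofReal C ^ (1 / 2 : ℝ) :=
        ENNReal.tsum_mul_right
    _ < ⊤ := ENNReal.mul_lt_top
        (tsum_measure_preimage_rpow_mul_lt_top (by linarith) hCq.le htail)
        (ENNReal.rpow_ne_top_of_nonneg (by norm_num) ENNReal.ofReal_ne_top).lt_top

theorem stmt6 {Ω : Type*} [MeasurableSpace Ω] (μ : Measure Ω) [IsProbabilityMeasure μ]
    (p C : ℝ) (hp : 1 ≤ p) (hC : 0 ≤ C)
    (a : ℕ → Ω → ℝ) (hma : ∀ k, Measurable (a k)) (ha0 : ∀ k ω, 0 ≤ a k ω)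
    (haint : ∀ k, Integrable (fun ω => (a k ω) ^ (2 * p)) μ)
    (haC : ∀ k, ∫ ω, (a k ω) ^ (2 * p) ∂μ ≤ C)
    (K : Ω → ℕ) (hmK : Measurable K) (hK1 : ∀ ω, 1 ≤ K ω)
    (hKtail : ∀ q : ℝ, 1 ≤ q → ∃ Cq : ℝ, 0 < Cq ∧ ∀ j : ℕ, 1 ≤ j →
      (μ {ω | K ω = j}).toReal ≤ Cq * (j : ℝ) ^ (-q)) :
    Integrable (fun ω => (∑ k ∈ Finset.Icc 1 (K ω), a k ω) ^ p) μ :=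
  stmt6_general μ p C hp a hma ha0 haint haC K hmK hKtail
end
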